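/- arXiv:1305.6340 — 3 statements merged into one kernel-verified Lean document; each statement's English description precedes it below -/
import Mathlib

section
/- Assume f0 and f1 are continuous positive densities on ℝ, and fdr(t) = p0*f0(t)/(p0*f0(t)+p1*f1(t)) is strictly monotonically decreasing in t. Define survival functions S0(t) = ∫_t^∞ f0 and S1(t) = ∫_t^∞ f1 (assumed positive), and Fdr(t) = p0*S0(t)/(p0*S0(t)+p1*S1(t)). Then for every α ∈ (0,1), the set {t : fdr(t) ≤ α} is contained in the set {t : Fdr(t) ≤ α}. -/
open MeasureTheory

/-- If the local FDR is strictly decreasing, then for every α ∈ (0,1),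
{t : fdr(t) ≤ α} ⊆ {t : Fdr(t) ≤ α}. -/
theorem fdr_le_subset_Fdr_le
    (p0 p1 : ℝ) (hp0 : 0 < p0) (hp0' : p0 < 1) (hp1 : p1 = 1 - p0)
    (f0 f1 : ℝ → ℝ)
    (hc0 : Continuous f0) (hc1 : Continuous f1)
    (hf0 : ∀ t, 0 < f0 t) (hf1 : ∀ t, 0 < f1 t)
    (hint0 : Integrable f0) (hint1 : Integrable f1)
    (hnorm0 : ∫ t, f0 t = 1) (hnorm1 : ∫ t, f1 t = 1)
    (S0 S1 : ℝ → ℝ)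
    (hS0 : ∀ t, S0 t = ∫ s in Set.Ioi t, f0 s)
    (hS1 : ∀ t, S1 t = ∫ s in Set.Ioi t, f1 s)
    (hS0pos : ∀ t, 0 < S0 t) (hS1pos : ∀ t, 0 < S1 t)
    (fdr Fdr : ℝ → ℝ)
    (hfdr : ∀ t, fdr t = p0 * f0 t / (p0 * f0 t + p1 * f1 t))
    (hFdr : ∀ t, Fdr t = p0 * S0 t / (p0 * S0 t + p1 * S1 t))
    (hmono : StrictAnti fdr) :
    ∀ α ∈ Set.Ioo (0 : ℝ) 1, {t | fdr t ≤ α} ⊆ {t | Fdr t ≤ α} := by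
  intro α hα t ht
  simp only [Set.mem_setOf_eq] at ht ⊢
  have hp1pos : 0 < p1 := by rw [hp1]; linarith
  have hD : ∀ s, 0 < p0 * f0 s + p1 * f1 s := fun s => by
    have h0 := hf0 s; have h1 := hf1 s; positivity
  have hpt : ∀ s ∈ Set.Ioi t, p0 * f0 s ≤ α * (p0 * f0 s + p1 * f1 s) := by
    intro s hs
    have h1 : fdr s ≤ α := le_trans (le_of_lt (hmono hs)) ht
    rw [hfdr s, div_le_iff₀ (hD s)] at h1
    linarith
  have hi0 : IntegrableOn (fun s => p0 * f0 s) (Set.Ioi t) :=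
    (hint0.const_mul p0).integrableOn
  have hi1' : IntegrableOn (fun s => p0 * f0 s + p1 * f1 s) (Set.Ioi t) :=
    ((hint0.const_mul p0).add (hint1.const_mul p1)).integrableOn
  have hi1 : IntegrableOn (fun s => α * (p0 * f0 s + p1 * f1 s)) (Set.Ioi t) :=
    hi1'.const_mul α
  have hle := setIntegral_mono_on hi0 hi1 measurableSet_Ioi hpt
  have hiS0 : IntegrableOn f0 (Set.Ioi t) := hint0.integrableOn
  have hiS1 : IntegrableOn f1 (Set.Ioi t) := hint1.integrableOn
  have e0 : ∫ s in Set.Ioi t, p0 * f0 s = p0 * S0 t := by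
    rw [integral_const_mul, hS0]
  have e1 : ∫ s in Set.Ioi t, α * (p0 * f0 s + p1 * f1 s)
      = α * (p0 * S0 t + p1 * S1 t) := by
    rw [integral_const_mul, integral_add (hiS0.const_mul p0) (hiS1.const_mul p1),
      integral_const_mul, integral_const_mul, hS0, hS1]
  rw [e0, e1] at hle
  have hDS : 0 < p0 * S0 t + p1 * S1 t := by
    have h0 := hS0pos t; have h1 := hS1pos t; positivity
  rw [hFdr t, div_le_iff₀ hDS]
  linarith
end

section
/- If fdr(t) = p0*f0(t)/(p0*f0(t)+p1*f1(t)) is monotonically decreasing in t (with f0, f1 continuous positive densities with positive survival functions), then Fdr(t) = p0*S0(t)/(p0*S0(t)+p1*S1(t)) is also monotonically decreasing in t. -/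
open MeasureTheory

/-- If fdr is monotonically decreasing, then Fdr is monotonically decreasing. -/
theorem Fdr_antitone_of_fdr_antitone
    (p0 p1 : ℝ) (hp0 : 0 < p0) (hp0' : p0 < 1) (hp1 : p1 = 1 - p0)
    (f0 f1 : ℝ → ℝ)
    (hc0 : Continuous f0) (hc1 : Continuous f1)
    (hf0 : ∀ t, 0 < f0 t) (hf1 : ∀ t, 0 < f1 t)
    (hint0 : Integrable f0) (hint1 : Integrable f1)
    (hnorm0 : ∫ t, f0 t = 1) (hnorm1 : ∫ t, f1 t = 1)
    (S0 S1 : ℝ → ℝ)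
    (hS0 : ∀ t, S0 t = ∫ s in Set.Ioi t, f0 s)
    (hS1 : ∀ t, S1 t = ∫ s in Set.Ioi t, f1 s)
    (hS0pos : ∀ t, 0 < S0 t) (hS1pos : ∀ t, 0 < S1 t)
    (fdr Fdr : ℝ → ℝ)
    (hfdr : ∀ t, fdr t = p0 * f0 t / (p0 * f0 t + p1 * f1 t))
    (hFdr : ∀ t, Fdr t = p0 * S0 t / (p0 * S0 t + p1 * S1 t))
    (hmono : Antitone fdr) :
    Antitone Fdr := by
  have hp1pos : 0 < p1 := by rw [hp1]; linarith
  -- pointwise key inequality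
  have hkey : ∀ u v : ℝ, v ≤ u → f0 u * f1 v ≤ f0 v * f1 u := by
    intro u v huv
    have h := hmono huv
    rw [hfdr, hfdr] at h
    have du : 0 < p0 * f0 u + p1 * f1 u :=
      add_pos (mul_pos hp0 (hf0 u)) (mul_pos hp1pos (hf1 u))
    have dv : 0 < p0 * f0 v + p1 * f1 v :=
      add_pos (mul_pos hp0 (hf0 v)) (mul_pos hp1pos (hf1 v))
    rw [div_le_div_iff₀ du dv] at h
    nlinarith [hf0 u, hf0 v, hf1 u, hf1 v, mul_pos hp0 hp1pos]
  intro s t hst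
  rw [hFdr, hFdr]
  have d1 : 0 < p0 * S0 t + p1 * S1 t :=
    add_pos (mul_pos hp0 (hS0pos t)) (mul_pos hp1pos (hS1pos t))
  have d2 : 0 < p0 * S0 s + p1 * S1 s :=
    add_pos (mul_pos hp0 (hS0pos s)) (mul_pos hp1pos (hS1pos s))
  rw [div_le_div_iff₀ d1 d2]
  -- reduce to S0 t * S1 s ≤ S0 s * S1 t
  have main : S0 t * S1 s ≤ S0 s * S1 t := by
    -- split integrals
    have hsplit0 : S0 s = (∫ u in Set.Ioc s t, f0 u) + S0 t := by
      rw [hS0, hS0, ← setIntegral_union (Set.Ioc_disjoint_Ioi le_rfl)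
        measurableSet_Ioi hint0.integrableOn hint0.integrableOn,
        Set.Ioc_union_Ioi_eq_Ioi hst]
    have hsplit1 : S1 s = (∫ u in Set.Ioc s t, f1 u) + S1 t := by
      rw [hS1, hS1, ← setIntegral_union (Set.Ioc_disjoint_Ioi le_rfl)
        measurableSet_Ioi hint1.integrableOn hint1.integrableOn,
        Set.Ioc_union_Ioi_eq_Ioi hst]
    set B0 := ∫ u in Set.Ioc s t, f0 u with hB0
    set B1 := ∫ u in Set.Ioc s t, f1 u with hB1
    -- S0 t ≤ (f0 t / f1 t) * S1 t
    have hft1 : 0 < f1 t := hf1 t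
    have hft0 : 0 < f0 t := hf0 t
    have h1 : S0 t * f1 t ≤ f0 t * S1 t := by
      have : S0 t ≤ ∫ u in Set.Ioi t, (f0 t / f1 t) * f1 u := by
        rw [hS0]
        refine setIntegral_mono_on hint0.integrableOn
          ((hint1.const_mul _).integrableOn) measurableSet_Ioi ?_
        intro u hu
        have hle : t ≤ u := le_of_lt hu
        have := hkey u t hle
        rw [div_mul_eq_mul_div, le_div_iff₀ hft1]
        linarith
      rw [integral_const_mul, ← hS1] at this
      calc S0 t * f1 t ≤ (f0 t / f1 t * S1 t) * f1 t := by
            exact mul_le_mul_of_nonneg_right this hft1.le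
        _ = f0 t * S1 t := by field_simp
    -- B1 ≤ (f1 t / f0 t) * B0
    have h2 : B1 * f0 t ≤ f1 t * B0 := by
      have : B1 ≤ ∫ u in Set.Ioc s t, (f1 t / f0 t) * f0 u := by
        rw [hB1]
        refine setIntegral_mono_on hint1.integrableOn
          ((hint0.const_mul _).integrableOn) measurableSet_Ioc ?_
        intro u hu
        have hle : u ≤ t := hu.2
        have := hkey t u hle
        rw [div_mul_eq_mul_div, le_div_iff₀ hft0]
        linarith
      rw [integral_const_mul, ← hB0] at this
      calc B1 * f0 t ≤ (f1 t / f0 t * B0) * f0 t := by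
            exact mul_le_mul_of_nonneg_right this hft0.le
        _ = f1 t * B0 := by field_simp
    have hB0nn : 0 ≤ B0 := by
      rw [hB0]; exact setIntegral_nonneg measurableSet_Ioc fun u _ => (hf0 u).le
    have hB1nn : 0 ≤ B1 := by
      rw [hB1]; exact setIntegral_nonneg measurableSet_Ioc fun u _ => (hf1 u).le
    -- key: S0 t * B1 ≤ B0 * S1 t
    have hkey2 : S0 t * B1 ≤ B0 * S1 t := by
      nlinarith [hS0pos t, hS1pos t, (hf0 t).le, (hf1 t).le]
    rw [hsplit0, hsplit1]
    nlinarith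
  nlinarith [hS0pos s, hS0pos t, hS1pos s, hS1pos t, mul_pos hp0 hp1pos]
end

section
/- Suppose a statistic value u has null density g0 and alternative density g1 on (0,1) with g1(u)/g0(u) monotonically decreasing (MLRC). Then the posterior probability of non-null given rejection, P(non-null | U < c) = p1*G1(c)/(p0*G0(c) + p1*G1(c)), is monotonically decreasing in the threshold c, where G_i(c) = ∫_0^c g_i. -/
/-!
Write `l = g₁(a)/g₀(a)`. Since `g₁/g₀` is decreasing, `g₁ ≥ l g₀` on `(0, a)` and `g₁ ≤ l g₀` on
`(a, b)`, so `G₁(a) ≥ l G₀(a)` while `G₁(b) - G₁(a) ≤ l (G₀(b) - G₀(a))`. Together these give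
`G₁(b) G₀(a) ≤ G₁(a) G₀(b)`, i.e. `G₁/G₀` is decreasing, and the posterior
`p₁ G₁ / (p₀ G₀ + p₁ G₁)` is an increasing function of `G₁/G₀`.
-/

open MeasureTheory Set

theorem integral_Ioo_eq_intervalIntegral {E : Type*} [NormedAddCommGroup E] [NormedSpace ℝ E]
    {μ : Measure ℝ} [NullSingletonClass μ] {f : ℝ → E} {a b : ℝ} (hab : a ≤ b) :
    ∫ x in Ioo a b, f x ∂μ = ∫ x in a..b, f x ∂μ := by
  rw [intervalIntegral.integral_of_le hab, integral_Ioc_eq_integral_Ioo]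

theorem intervalIntegral_nonneg_of_forall_mem_Ioo {μ : Measure ℝ} [NullSingletonClass μ]
    {f : ℝ → ℝ} {a b : ℝ} (hab : a ≤ b) (hf : ∀ x ∈ Ioo a b, 0 ≤ f x) :
    0 ≤ ∫ x in a..b, f x ∂μ := by
  rw [← integral_Ioo_eq_intervalIntegral hab]
  exact setIntegral_nonneg measurableSet_Ioo hf

theorem intervalIntegral_mul_le_mul_of_antitoneOn_div {f g : ℝ → ℝ} {x₀ a b : ℝ}
    (hg : ∀ x ∈ Ioo x₀ b, 0 < g x) (hfg : AntitoneOn (fun x => f x / g x) (Ioo x₀ b))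
    (hfi : IntervalIntegrable f volume x₀ b) (hgi : IntervalIntegrable g volume x₀ b)
    (hx₀a : x₀ < a) (hab : a < b) :
    (∫ x in x₀..b, f x) * ∫ x in x₀..a, g x ≤ (∫ x in x₀..a, f x) * ∫ x in x₀..b, g x := by
  have ha : a ∈ Ioo x₀ b := ⟨hx₀a, hab⟩
  set l := f a / g a
  have ha' : a ∈ uIcc x₀ b := mem_uIcc_of_le hx₀a.le hab.le
  have hsub_left : uIcc x₀ a ⊆ uIcc x₀ b := uIcc_subset_uIcc left_mem_uIcc ha'
  have hsub_right : uIcc a b ⊆ uIcc x₀ b := uIcc_subset_uIcc ha' right_mem_uIcc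
  have hfi_left := hfi.mono_set hsub_left
  have hgi_left := hgi.mono_set hsub_left
  have hfi_right := hfi.mono_set hsub_right
  have hgi_right := hgi.mono_set hsub_right
  have hleft : l * ∫ x in x₀..a, g x ≤ ∫ x in x₀..a, f x := by
    rw [← intervalIntegral.integral_const_mul]
    refine intervalIntegral.integral_mono_on_of_le_Ioo hx₀a.le (hgi_left.const_mul l) hfi_left
      fun x hx => ?_
    have hx' : x ∈ Ioo x₀ b := ⟨hx.1, hx.2.trans hab⟩
    exact (le_div_iff₀ (hg x hx')).mp (hfg hx' ha hx.2.le)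
  have hright : ∫ x in a..b, f x ≤ l * ∫ x in a..b, g x := by
    rw [← intervalIntegral.integral_const_mul]
    refine intervalIntegral.integral_mono_on_of_le_Ioo hab.le hfi_right (hgi_right.const_mul l)
      fun x hx => ?_
    have hx' : x ∈ Ioo x₀ b := ⟨hx₀a.trans hx.1, hx.2⟩
    exact (div_le_iff₀ (hg x hx')).mp (hfg ha hx' hx.1.le)
  have hg_left : 0 ≤ ∫ x in x₀..a, g x := intervalIntegral_nonneg_of_forall_mem_Ioo hx₀a.le
    fun x hx => (hg x ⟨hx.1, hx.2.trans hab⟩).le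
  have hg_right : 0 ≤ ∫ x in a..b, g x := intervalIntegral_nonneg_of_forall_mem_Ioo hab.le
    fun x hx => (hg x ⟨hx₀a.trans hx.1, hx.2⟩).le
  rw [← intervalIntegral.integral_add_adjacent_intervals hfi_left hfi_right,
    ← intervalIntegral.integral_add_adjacent_intervals hgi_left hgi_right]
  nlinarith [mul_le_mul_of_nonneg_right hright hg_left, mul_le_mul_of_nonneg_right hleft hg_right]

theorem posterior_nonnull_antitone_general
    (p0 p1 : ℝ) (hp0 : 0 < p0) (hp0' : p0 < 1) (hp1 : p1 = 1 - p0)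
    (g0 g1 : ℝ → ℝ)
    (hg0 : ∀ u ∈ Set.Ioo (0 : ℝ) 1, 0 < g0 u)
    (hmlrc : AntitoneOn (fun u => g1 u / g0 u) (Set.Ioo 0 1))
    (G0 G1 : ℝ → ℝ)
    (hG0 : ∀ c, G0 c = ∫ u in Set.Ioo (0 : ℝ) c, g0 u)
    (hG1 : ∀ c, G1 c = ∫ u in Set.Ioo (0 : ℝ) c, g1 u)
    (hG0pos : ∀ c, 0 < c → 0 < G0 c) (hG1pos : ∀ c, 0 < c → 0 < G1 c) :
    AntitoneOn (fun c => p1 * G1 c / (p0 * G0 c + p1 * G1 c))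
      (Set.Ioc (0 : ℝ) 1) := by
  have hp1_pos : 0 < p1 := by linarith
  intro a ha b hb hab
  rcases hab.eq_or_lt with rfl | hab
  · rfl
  have hg_int {G g : ℝ → ℝ} (hG : ∀ c, G c = ∫ u in Ioo (0 : ℝ) c, g u) (hGb : 0 < G b) :
      IntervalIntegrable g volume 0 b :=
    (intervalIntegrable_iff_integrableOn_Ioo_of_le hb.1.le).2
      (.of_integral_ne_zero (hG b ▸ hGb.ne'))
  have key : G1 b * G0 a ≤ G1 a * G0 b := by
    rw [hG0, hG0, hG1, hG1, integral_Ioo_eq_intervalIntegral ha.1.le,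
      integral_Ioo_eq_intervalIntegral ha.1.le, integral_Ioo_eq_intervalIntegral hb.1.le,
      integral_Ioo_eq_intervalIntegral hb.1.le]
    exact intervalIntegral_mul_le_mul_of_antitoneOn_div
      (fun u hu => hg0 u ⟨hu.1, hu.2.trans_le hb.2⟩) (hmlrc.mono (Ioo_subset_Ioo_right hb.2))
      (hg_int hG1 (hG1pos b hb.1)) (hg_int hG0 (hG0pos b hb.1)) ha.1 hab
  have hD {c : ℝ} (hc : 0 < c) : 0 < p0 * G0 c + p1 * G1 c :=
    add_pos (mul_pos hp0 (hG0pos c hc)) (mul_pos hp1_pos (hG1pos c hc))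
  dsimp only
  rw [div_le_div_iff₀ (hD hb.1) (hD ha.1)]
  nlinarith [mul_le_mul_of_nonneg_left key (mul_pos hp0 hp1_pos).le]

/-- Under the MLRC, P(non-null | U < c) = p1·G1(c)/(p0·G0(c)+p1·G1(c)) is
monotonically decreasing in the threshold c. -/
theorem posterior_nonnull_antitone
    (p0 p1 : ℝ) (hp0 : 0 < p0) (hp0' : p0 < 1) (hp1 : p1 = 1 - p0)
    (g0 g1 : ℝ → ℝ)
    (hg0 : ∀ u ∈ Set.Ioo (0 : ℝ) 1, 0 < g0 u)
    (hg1 : ∀ u ∈ Set.Ioo (0 : ℝ) 1, 0 < g1 u)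
    (hc0 : ContinuousOn g0 (Set.Ioo 0 1)) (hc1 : ContinuousOn g1 (Set.Ioo 0 1))
    (hmlrc : AntitoneOn (fun u => g1 u / g0 u) (Set.Ioo 0 1))
    (G0 G1 : ℝ → ℝ)
    (hG0 : ∀ c, G0 c = ∫ u in Set.Ioo (0 : ℝ) c, g0 u)
    (hG1 : ∀ c, G1 c = ∫ u in Set.Ioo (0 : ℝ) c, g1 u)
    (hG0pos : ∀ c, 0 < c → 0 < G0 c) (hG1pos : ∀ c, 0 < c → 0 < G1 c) :
    AntitoneOn (fun c => p1 * G1 c / (p0 * G0 c + p1 * G1 c))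
      (Set.Ioc (0 : ℝ) 1) :=
  posterior_nonnull_antitone_general p0 p1 hp0 hp0' hp1 g0 g1 hg0 hmlrc G0 G1 hG0 hG1 hG0pos hG1pos
end
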